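/- For k > 0 and y > 0, C_BS(k,y) + C_BS(k, 2k/y) = 1 - 2·e^k·Φ(-k/y - y/2) ≤ 1. In particular, for 0 < c < 1, Y_BS(k,c)·Y_BS(k,1-c) ≥ 2k. -/

import Mathlib

open MeasureTheory Real Filter Asymptotics Set

/-- Standard normal density. -/
noncomputable def phi (z : ℝ) : ℝ := (Real.sqrt (2 * Real.pi))⁻¹ * Real.exp (-z ^ 2 / 2)

/-- Standard normal CDF. -/
noncomputable def Phi (x : ℝ) : ℝ := ∫ z in Set.Iic x, phi z

/-- Black–Scholes normalized call price. -/
noncomputable def CBS (k y : ℝ) : ℝ :=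
  if 0 < y then Phi (-k / y + y / 2) - Real.exp k * Phi (-k / y - y / 2)
  else max (1 - Real.exp k) 0

/-- Implied total standard deviation: inverse of `CBS k` on `[0,∞)`. -/
noncomputable def YBS (k c : ℝ) : ℝ := sInf {y : ℝ | 0 ≤ y ∧ CBS k y = c}

/-- Inverse of the standard normal CDF on (0,1). -/
noncomputable def PhiInv (u : ℝ) : ℝ := sInf {x : ℝ | u ≤ Phi x}

/-- Extended-real quantile with the convention `Φ⁻¹(u) = +∞` for `u ≥ 1`, `-∞` for `u ≤ 0`. -/
noncomputable def PhiInvE (u : ℝ) : EReal :=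
  if 1 ≤ u then ⊤ else if u ≤ 0 then ⊥ else ((PhiInv u : ℝ) : EReal)


/-!
With `d₊ = -k/y + y/2` and `d₋ = -k/y - y/2`, the substitution `y ↦ 2k/y` maps `d₊` to `-d₊` and
fixes `d₋`, so `Φ(d₊) + Φ(-d₊) = 1` gives the closed form of `C(y) + C(2k/y)`, which is at most `1`.
If `C(y₁) = c` and `C(y₂) = 1 - c`, then `C(2k/y₁) ≤ 1 - C(y₁) = C(y₂)`, and since `C` is strictly
increasing in `y` (its derivative is `φ(d₊) > 0`), `2k/y₁ ≤ y₂`. Such `y₁, y₂` exist by the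
intermediate value theorem, as `C` increases from `0` (as `y → 0⁺`) to `1`.
-/

open ProbabilityTheory Topology

lemma phi_eq_gaussianPDFReal : phi = gaussianPDFReal 0 1 := by
  ext z
  simp [phi, gaussianPDFReal]

lemma integrable_phi : Integrable phi := phi_eq_gaussianPDFReal ▸ integrable_gaussianPDFReal 0 1

lemma phi_pos (z : ℝ) : 0 < phi z := by
  unfold phi
  positivity

lemma phi_neg (z : ℝ) : phi (-z) = phi z := by
  simp [phi]

lemma Phi_eq_cdf : Phi = cdf (gaussianReal 0 1) := by
  ext x
  rw [cdf_eq_real, measureReal_def, gaussianReal_apply_eq_integral _ one_ne_zero,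
    ENNReal.toReal_ofReal (setIntegral_nonneg measurableSet_Iic
      fun z _ => gaussianPDFReal_nonneg _ _ _), Phi, phi_eq_gaussianPDFReal]

lemma Phi_nonneg (x : ℝ) : 0 ≤ Phi x :=
  Phi_eq_cdf ▸ cdf_nonneg _ x

lemma tendsto_Phi_atTop : Tendsto Phi atTop (𝓝 1) :=
  Phi_eq_cdf ▸ tendsto_cdf_atTop _

lemma tendsto_Phi_atBot : Tendsto Phi atBot (𝓝 0) :=
  Phi_eq_cdf ▸ tendsto_cdf_atBot _

lemma Phi_add_Phi_neg (x : ℝ) : Phi x + Phi (-x) = 1 := by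
  have hneg : Phi (-x) = ∫ z in Ioi x, phi z := by
    rw [Phi, ← integral_comp_neg_Ioi]
    simp_rw [phi_neg]
  rw [Phi, hneg, intervalIntegral.integral_Iic_add_Ioi integrable_phi.integrableOn
    integrable_phi.integrableOn, phi_eq_gaussianPDFReal,
    integral_gaussianPDFReal_eq_one _ one_ne_zero]

lemma Phi_sub_Phi (a b : ℝ) : Phi b - Phi a = ∫ z in a..b, phi z :=
  intervalIntegral.integral_Iic_sub_Iic integrable_phi.integrableOn integrable_phi.integrableOn

lemma hasDerivAt_Phi (x : ℝ) : HasDerivAt Phi (phi x) x := by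
  have hcont : Continuous phi := by unfold phi; fun_prop
  refine ((hcont.integral_hasStrictDerivAt 0 x).hasDerivAt.const_add (Phi 0)).congr_of_eventuallyEq
    (Eventually.of_forall fun u => ?_)
  simp only [← Phi_sub_Phi, add_sub_cancel]

lemma CBS_of_pos (k : ℝ) {y : ℝ} (hy : 0 < y) :
    CBS k y = Phi (-k / y + y / 2) - exp k * Phi (-k / y - y / 2) :=
  if_pos hy

lemma CBS_zero {k : ℝ} (hk : 0 ≤ k) : CBS k 0 = 0 := by
  simp [CBS, one_le_exp hk]

lemma exp_mul_phi_eq_phi (k : ℝ) {y : ℝ} (hy : y ≠ 0) :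
    exp k * phi (-k / y - y / 2) = phi (-k / y + y / 2) := by
  rw [phi, phi, mul_left_comm, ← exp_add]
  congr 3
  field_simp
  ring

/-- The vega: the two terms coming from the chain rule combine via `exp_mul_phi_eq_phi`. -/
lemma hasDerivAt_CBS (k : ℝ) {y : ℝ} (hy : 0 < y) :
    HasDerivAt (CBS k) (phi (-k / y + y / 2)) y := by
  have hinv : HasDerivAt (fun y : ℝ => -k / y) (k / y ^ 2) y := by
    simpa [div_eq_mul_inv, neg_div] using (hasDerivAt_inv hy.ne').const_mul (-k)
  have hhalf := (hasDerivAt_id y).div_const 2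
  have hplus : HasDerivAt (fun y => -k / y + y / 2) (k / y ^ 2 + 1 / 2) y := hinv.add hhalf
  have hminus : HasDerivAt (fun y => -k / y - y / 2) (k / y ^ 2 - 1 / 2) y := hinv.sub hhalf
  have h := ((hasDerivAt_Phi _).comp y hplus).sub
    (((hasDerivAt_Phi _).comp y hminus).const_mul (exp k))
  refine (h.congr_deriv ?_).congr_of_eventuallyEq ?_
  · linear_combination (1 / 2 - k / y ^ 2) * exp_mul_phi_eq_phi k hy.ne'
  filter_upwards [eventually_gt_nhds hy] with u hu using CBS_of_pos k hu

lemma CBS_strictMonoOn (k : ℝ) : StrictMonoOn (CBS k) (Ioi 0) :=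
  strictMonoOn_of_deriv_pos (convex_Ioi 0)
    (fun _ hy => (hasDerivAt_CBS k hy).continuousAt.continuousWithinAt)
    fun y hy => by
      rw [interior_Ioi] at hy
      exact (hasDerivAt_CBS k hy).deriv ▸ phi_pos _

lemma tendsto_CBS_atTop (k : ℝ) : Tendsto (CBS k) atTop (𝓝 1) := by
  have hinv : Tendsto (fun y : ℝ => -k / y) atTop (𝓝 0) :=
    tendsto_const_nhds.div_atTop tendsto_id
  have hhalf : Tendsto (fun y : ℝ => y / 2) atTop atTop := tendsto_id.atTop_div_const two_pos
  have h := (tendsto_Phi_atTop.comp (hinv.add_atTop hhalf)).sub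
    ((tendsto_Phi_atBot.comp (hinv.add_atBot (tendsto_neg_atTop_atBot.comp hhalf))).const_mul
      (exp k))
  rw [mul_zero, sub_zero] at h
  refine h.congr' ?_
  filter_upwards [eventually_gt_atTop 0] with y hy
  simp [CBS_of_pos k hy, sub_eq_add_neg]

lemma tendsto_CBS_nhdsGT_zero {k : ℝ} (hk : 0 < k) : Tendsto (CBS k) (𝓝[>] 0) (𝓝 0) := by
  have hinv : Tendsto (fun y : ℝ => -k / y) (𝓝[>] 0) atBot := by
    simpa [Function.comp_def, neg_div, div_eq_mul_inv] using
      tendsto_neg_atTop_atBot.comp (tendsto_inv_nhdsGT_zero.const_mul_atTop hk)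
  have hhalf : Tendsto (fun y : ℝ => y / 2) (𝓝[>] 0) (𝓝 0) := tendsto_nhdsWithin_of_tendsto_nhds
    (by simpa using (continuous_id.div_const (2 : ℝ)).tendsto 0)
  have h := (tendsto_Phi_atBot.comp (hinv.atBot_add hhalf)).sub
    ((tendsto_Phi_atBot.comp (hinv.atBot_add hhalf.neg)).const_mul (exp k))
  rw [mul_zero, sub_zero] at h
  refine h.congr' ?_
  filter_upwards [self_mem_nhdsWithin] with y hy
  simp [CBS_of_pos k hy, sub_eq_add_neg]

lemma CBS_add_CBS_two_mul_div {k y : ℝ} (hk : 0 < k) (hy : 0 < y) :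
    CBS k y + CBS k (2 * k / y) = 1 - 2 * exp k * Phi (-k / y - y / 2) := by
  have hplus : -k / (2 * k / y) + 2 * k / y / 2 = -(-k / y + y / 2) := by
    field_simp
    ring
  have hminus : -k / (2 * k / y) - 2 * k / y / 2 = -k / y - y / 2 := by
    field_simp
    ring
  rw [CBS_of_pos k hy, CBS_of_pos k (by positivity), hplus, hminus]
  linear_combination Phi_add_Phi_neg (-k / y + y / 2)

lemma CBS_add_CBS_two_mul_div_le_one {k y : ℝ} (hk : 0 < k) (hy : 0 < y) :
    CBS k y + CBS k (2 * k / y) ≤ 1 := by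
  rw [CBS_add_CBS_two_mul_div hk hy]
  nlinarith [exp_pos k, Phi_nonneg (-k / y - y / 2)]

lemma two_mul_le_mul_of_CBS_add_CBS_eq_one {k y₁ y₂ : ℝ} (hk : 0 < k) (hy₁ : 0 < y₁)
    (hy₂ : 0 < y₂) (h : CBS k y₁ + CBS k y₂ = 1) : 2 * k ≤ y₁ * y₂ := by
  have hle : CBS k (2 * k / y₁) ≤ CBS k y₂ := by
    linarith [CBS_add_CBS_two_mul_div_le_one hk hy₁]
  have hdiv : 2 * k / y₁ ≤ y₂ :=
    ((CBS_strictMonoOn k).le_iff_le (div_pos (mul_pos two_pos hk) hy₁) hy₂).1 hle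
  rwa [div_le_iff₀ hy₁, mul_comm y₂] at hdiv

lemma exists_CBS_eq {k c : ℝ} (hk : 0 < k) (hc₀ : 0 < c) (hc₁ : c < 1) :
    ∃ y, 0 < y ∧ CBS k y = c := by
  obtain ⟨b, hbc, hb⟩ :=
    (((tendsto_CBS_atTop k).eventually (eventually_gt_nhds hc₁)).and
      (eventually_gt_atTop 0)).exists
  obtain ⟨a, hac, ha⟩ :=
    (((tendsto_CBS_nhdsGT_zero hk).eventually (eventually_lt_nhds hc₀)).and
      (Ioo_mem_nhdsGT hb)).exists
  have hcont : ContinuousOn (CBS k) (Icc a b) := fun y hy =>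
    (hasDerivAt_CBS k (ha.1.trans_le hy.1)).continuousAt.continuousWithinAt
  obtain ⟨y, hy, hyc⟩ := intermediate_value_Icc ha.2.le hcont ⟨hac.le, hbc.le⟩
  exact ⟨y, ha.1.trans_le hy.1, hyc⟩

lemma YBS_CBS {k y : ℝ} (hk : 0 ≤ k) (hy : 0 < y) (hc : 0 < CBS k y) :
    YBS k (CBS k y) = y := by
  suffices {z : ℝ | 0 ≤ z ∧ CBS k z = CBS k y} = {y} by rw [YBS, this, csInf_singleton]
  ext z
  refine ⟨fun ⟨hz, hzy⟩ => ?_, fun hz => ⟨hz ▸ hy.le, hz ▸ rfl⟩⟩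
  rcases hz.eq_or_lt with rfl | hz
  · rw [CBS_zero hk] at hzy
    exact absurd hzy hc.ne
  · exact (CBS_strictMonoOn k).injOn hz hy hzy

theorem stmt_16 (k : ℝ) (hk : 0 < k) :
    (∀ y : ℝ, 0 < y →
      CBS k y + CBS k (2 * k / y) = 1 - 2 * Real.exp k * Phi (-k / y - y / 2) ∧
      CBS k y + CBS k (2 * k / y) ≤ 1) ∧
    ∀ c : ℝ, 0 < c → c < 1 → 2 * k ≤ YBS k c * YBS k (1 - c) := by
  refine ⟨fun y hy => ⟨CBS_add_CBS_two_mul_div hk hy, CBS_add_CBS_two_mul_div_le_one hk hy⟩,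
    fun c hc₀ hc₁ => ?_⟩
  obtain ⟨y₁, hy₁, rfl⟩ := exists_CBS_eq hk hc₀ hc₁
  obtain ⟨y₂, hy₂, h₂⟩ := exists_CBS_eq hk (sub_pos.2 hc₁) (by linarith)
  rw [← h₂, YBS_CBS hk.le hy₁ hc₀, YBS_CBS hk.le hy₂ (h₂ ▸ sub_pos.2 hc₁)]
  exact two_mul_le_mul_of_CBS_add_CBS_eq_one hk hy₁ hy₂ (by linarith)
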